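/- The operator 𝔸 is closed in Y: if (uₙ,vₙ,wₙ) ∈ D(𝔸) for all n, (uₙ,vₙ,wₙ) → (u,v,w) in Y, and 𝔸(uₙ,vₙ,wₙ) → (f,g,h) in Y, then (u,v,w) ∈ D(𝔸) and 𝔸(u,v,w) = (f,g,h). -/

import Mathlib

open Filter Topology

noncomputable section

local notation "⟪" x ", " y "⟫" => @inner ℝ _ _ x y

variable {X : Type*} [NormedAddCommGroup X] [InnerProductSpace ℝ X] [CompleteSpace X]

/-- Membership in the fractional power space `X^{1/2}` (here `2σ = 1`). -/
def memHalf (e : HilbertBasis ℕ ℝ X) (lam : ℕ → ℝ) (φ : X) : Prop :=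
  Summable fun k => lam k * ⟪φ, e k⟫ ^ 2

/-- Membership in the fractional power space `X^1` (here `2σ = 2`). -/
def memOne (e : HilbertBasis ℕ ℝ X) (lam : ℕ → ℝ) (φ : X) : Prop :=
  Summable fun k => lam k ^ 2 * ⟪φ, e k⟫ ^ 2

/-- The squared `X^{1/2}`-norm: `‖φ‖²_{X^{1/2}} = ∑_k λ_k ⟨φ,e_k⟩²`. -/
def nHalfSq (e : HilbertBasis ℕ ℝ X) (lam : ℕ → ℝ) (φ : X) : ℝ :=
  ∑' k, lam k * ⟪φ, e k⟫ ^ 2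

/-- The squared `X^{-1/2}`-norm of an element of `X`: `∑_k λ_k⁻¹ ⟨φ,e_k⟩²`. -/
def nNegSq (e : HilbertBasis ℕ ℝ X) (lam : ℕ → ℝ) (φ : X) : ℝ :=
  ∑' k, (lam k)⁻¹ * ⟪φ, e k⟫ ^ 2

/-- The diagonal operator `A φ = ∑_k λ_k ⟨φ,e_k⟩ e_k`. -/
def Aop (e : HilbertBasis ℕ ℝ X) (lam : ℕ → ℝ) (φ : X) : X :=
  ∑' k, (lam k * ⟪φ, e k⟫) • e k

/-- The inverse operator `A⁻¹ φ = ∑_k λ_k⁻¹ ⟨φ,e_k⟩ e_k`. -/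
def Ainv (e : HilbertBasis ℕ ℝ X) (lam : ℕ → ℝ) (φ : X) : X :=
  ∑' k, ((lam k)⁻¹ * ⟪φ, e k⟫) • e k

/-- The norm of `Y = X^{1/2} × X^{1/2} × X`. -/
def Ynorm (e : HilbertBasis ℕ ℝ X) (lam : ℕ → ℝ) (u v w : X) : ℝ :=
  Real.sqrt (nHalfSq e lam u + nHalfSq e lam v + ‖w‖ ^ 2)

/-! Since `λ_k ≥ λ₀ > 0`, convergence in `Y` forces convergence of every component in `X`;
hence `vₙ → V = f`, `wₙ → W = g`, and `A zₙ = -α wₙ - (third component of 𝔸(uₙ,vₙ,wₙ))`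
converges in `X` to some `L`, where `zₙ = βvₙ + γuₙ + δwₙ → Z`. The diagonal operator `A` is
closed: the coefficient identities `⟨A zₙ, e_k⟩ = λ_k ⟨zₙ, e_k⟩` pass to the limit, and by
Parseval the limiting identities `⟨L, e_k⟩ = λ_k ⟨Z, e_k⟩` say exactly that `Z ∈ X¹` and
`A Z = L`. -/

namespace HilbertBasis

variable {ι : Type*} (e : HilbertBasis ι ℝ X)

omit [CompleteSpace X] in
theorem hasSum_inner_sq (x : X) : HasSum (fun i => ⟪x, e i⟫ ^ 2) (‖x‖ ^ 2) := by
  simpa [real_inner_comm x, sq, real_inner_self_eq_norm_sq] using e.hasSum_inner_mul_inner x x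

theorem summable_smul_of_summable_sq {c : ι → ℝ} (hc : Summable fun i => c i ^ 2) :
    Summable fun i => c i • e i := by
  simpa using (e.orthonormal.orthogonalFamily.summable_iff_norm_sq_summable c).2
    (by simpa only [Real.norm_eq_abs, sq_abs] using hc)

omit [CompleteSpace X] in
theorem inner_eq_of_hasSum {c : ι → ℝ} {S : X} (hS : HasSum (fun i => c i • e i) S) (k : ι) :
    ⟪S, e k⟫ = c k := by
  have hk : HasSum (fun i => ⟪e k, c i • e i⟫) ⟪e k, S⟫ := hS.mapL (innerSL ℝ (e k))
  rw [real_inner_comm]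
  refine hk.unique ?_
  convert hasSum_single (f := fun i => ⟪e k, c i • e i⟫) k fun i hi => ?_ using 1
  · simp [real_inner_smul_right, e.orthonormal.1 k]
  · simp [real_inner_smul_right, e.orthonormal.2 hi.symm]

end HilbertBasis

section DiagonalOperator

variable (e : HilbertBasis ℕ ℝ X) (lam : ℕ → ℝ)

theorem hasSum_Aop {z : X} (hz : memOne e lam z) :
    HasSum (fun k => (lam k * ⟪z, e k⟫) • e k) (Aop e lam z) :=
  (e.summable_smul_of_summable_sq (by simpa only [memOne, mul_pow] using hz)).hasSum

theorem inner_Aop {z : X} (hz : memOne e lam z) (k : ℕ) :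
    ⟪Aop e lam z, e k⟫ = lam k * ⟪z, e k⟫ :=
  e.inner_eq_of_hasSum (hasSum_Aop e lam hz) k

theorem memOne_and_Aop_eq_iff {z L : X} :
    memOne e lam z ∧ Aop e lam z = L ↔ ∀ k, ⟪L, e k⟫ = lam k * ⟪z, e k⟫ := by
  constructor
  · rintro ⟨hz, rfl⟩
    exact inner_Aop e lam hz
  · intro hL
    have hz : memOne e lam z :=
      (e.hasSum_inner_sq L).summable.congr fun k => by rw [hL k, mul_pow]
    refine ⟨hz, (hasSum_Aop e lam hz).unique ?_⟩
    simpa [e.repr_apply_apply, real_inner_comm, hL] using e.hasSum_repr L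

theorem memOne_and_Aop_eq_of_tendsto {ι : Type*} {l : Filter ι} [l.NeBot] {z : ι → X} {Z L : X}
    (hz : ∀ n, memOne e lam (z n)) (hzZ : Tendsto z l (𝓝 Z))
    (hAz : Tendsto (fun n => Aop e lam (z n)) l (𝓝 L)) :
    memOne e lam Z ∧ Aop e lam Z = L := by
  refine (memOne_and_Aop_eq_iff e lam).2 fun k =>
    tendsto_nhds_unique (hAz.inner tendsto_const_nhds) ?_
  simpa only [inner_Aop e lam (hz _)] using (hzZ.inner tendsto_const_nhds).const_mul (lam k)

end DiagonalOperator

section FractionalNorms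

variable {e : HilbertBasis ℕ ℝ X} {lam : ℕ → ℝ}

omit [CompleteSpace X] in
theorem memHalf.sub (hlam : ∀ k, 0 ≤ lam k) {φ ψ : X} (hφ : memHalf e lam φ)
    (hψ : memHalf e lam ψ) : memHalf e lam (φ - ψ) := by
  refine .of_nonneg_of_le (fun k => mul_nonneg (hlam k) (sq_nonneg _)) (fun k => ?_)
    ((hφ.mul_left 2).add (hψ.mul_left 2))
  rw [inner_sub_left]
  nlinarith [mul_nonneg (hlam k) (sq_nonneg (⟪φ, e k⟫ + ⟪ψ, e k⟫))]

omit [CompleteSpace X] in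
theorem nHalfSq_nonneg (hlam : ∀ k, 0 ≤ lam k) (φ : X) : 0 ≤ nHalfSq e lam φ :=
  tsum_nonneg fun k => mul_nonneg (hlam k) (sq_nonneg _)

omit [CompleteSpace X] in
theorem mul_norm_sq_le_nHalfSq {lam0 : ℝ} (hlam : ∀ k, lam0 ≤ lam k) {φ : X}
    (hφ : memHalf e lam φ) : lam0 * ‖φ‖ ^ 2 ≤ nHalfSq e lam φ := by
  rw [← (e.hasSum_inner_sq φ).tsum_eq, ← tsum_mul_left]
  exact Summable.tsum_le_tsum (fun k => mul_le_mul_of_nonneg_right (hlam k) (sq_nonneg _))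
    ((e.hasSum_inner_sq φ).summable.mul_left lam0) hφ

omit [CompleteSpace X] in
theorem Ynorm_comm (a b c : X) : Ynorm e lam a b c = Ynorm e lam b a c := by
  rw [Ynorm, Ynorm, add_comm (nHalfSq e lam a)]

omit [CompleteSpace X] in
theorem norm_le_Ynorm_div_sqrt {lam0 : ℝ} (hlam0 : 0 < lam0) (hlam : ∀ k, lam0 ≤ lam k)
    {a : X} (ha : memHalf e lam a) (b c : X) : ‖a‖ ≤ Ynorm e lam a b c / √lam0 := by
  have hb := nHalfSq_nonneg (e := e) (fun k => hlam0.le.trans (hlam k)) b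
  have ha' := mul_norm_sq_le_nHalfSq hlam ha
  rw [le_div_iff₀ (Real.sqrt_pos.2 hlam0), Ynorm]
  refine Real.le_sqrt_of_sq_le ?_
  rw [mul_pow, Real.sq_sqrt hlam0.le]
  linarith [sq_nonneg ‖c‖]

omit [CompleteSpace X] in
theorem norm_le_Ynorm (hlam : ∀ k, 0 ≤ lam k) (a b c : X) : ‖c‖ ≤ Ynorm e lam a b c := by
  rw [Ynorm]
  refine Real.le_sqrt_of_sq_le ?_
  linarith [nHalfSq_nonneg (e := e) hlam a, nHalfSq_nonneg (e := e) hlam b]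

omit [CompleteSpace X] in
theorem tendsto_of_tendsto_Ynorm_sub {lam0 : ℝ} (hlam0 : 0 < lam0) (hlam : ∀ k, lam0 ≤ lam k)
    {ι : Type*} {l : Filter ι} {a b c : ι → X} {A B C : X}
    (ha : ∀ n, memHalf e lam (a n)) (hA : memHalf e lam A)
    (hb : ∀ n, memHalf e lam (b n)) (hB : memHalf e lam B)
    (h : Tendsto (fun n => Ynorm e lam (a n - A) (b n - B) (c n - C)) l (𝓝 0)) :
    Tendsto a l (𝓝 A) ∧ Tendsto b l (𝓝 B) ∧ Tendsto c l (𝓝 C) := by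
  have hlam' : ∀ k, 0 ≤ lam k := fun k => hlam0.le.trans (hlam k)
  have hdiv : Tendsto (fun n => Ynorm e lam (a n - A) (b n - B) (c n - C) / √lam0) l (𝓝 0) := by
    simpa using h.div_const √lam0
  refine ⟨tendsto_sub_nhds_zero_iff.1 (squeeze_zero_norm (fun n => ?_) hdiv),
    tendsto_sub_nhds_zero_iff.1 (squeeze_zero_norm (fun n => ?_) hdiv),
    tendsto_sub_nhds_zero_iff.1 (squeeze_zero_norm (fun n => norm_le_Ynorm hlam' _ _ _) h)⟩
  · exact norm_le_Ynorm_div_sqrt hlam0 hlam ((ha n).sub hlam' hA) _ _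
  · rw [Ynorm_comm]
    exact norm_le_Ynorm_div_sqrt hlam0 hlam ((hb n).sub hlam' hB) _ _

end FractionalNorms

theorem operator_A_closed_general
    (e : HilbertBasis ℕ ℝ X) (lam : ℕ → ℝ) (lam0 : ℝ)
    (hlam0 : 0 < lam0) (hlam : ∀ k, lam0 ≤ lam k)
    (α β γ δ : ℝ)
    (u v w : ℕ → X)
    (hdom : ∀ n, memHalf e lam (u n) ∧ memHalf e lam (v n) ∧ memHalf e lam (w n) ∧
      memOne e lam (β • v n + γ • u n + δ • w n))
    (U V W f g h : X)
    (hU : memHalf e lam U) (hV : memHalf e lam V)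
    (hf : memHalf e lam f) (hg : memHalf e lam g)
    (hconv : Tendsto (fun n => Ynorm e lam (u n - U) (v n - V) (w n - W)) atTop (𝓝 0))
    (hconvA : Tendsto (fun n => Ynorm e lam (v n - f) (w n - g)
        (((-α) • w n - Aop e lam (β • v n + γ • u n + δ • w n)) - h)) atTop (𝓝 0)) :
    memHalf e lam W ∧ memOne e lam (β • V + γ • U + δ • W) ∧
      V = f ∧ W = g ∧ (-α) • W - Aop e lam (β • V + γ • U + δ • W) = h := by
  obtain ⟨hu, hv, hw⟩ := tendsto_of_tendsto_Ynorm_sub hlam0 hlam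
    (fun n => (hdom n).1) hU (fun n => (hdom n).2.1) hV hconv
  obtain ⟨hvf, hwg, hAw⟩ := tendsto_of_tendsto_Ynorm_sub hlam0 hlam
    (fun n => (hdom n).2.1) hf (fun n => (hdom n).2.2.1) hg hconvA
  have hz : Tendsto (fun n => β • v n + γ • u n + δ • w n) atTop (𝓝 (β • V + γ • U + δ • W)) :=
    ((hv.const_smul β).add (hu.const_smul γ)).add (hw.const_smul δ)
  have hAz : Tendsto (fun n => Aop e lam (β • v n + γ • u n + δ • w n)) atTop
      (𝓝 ((-α) • W - h)) := by
    simpa only [sub_sub_cancel] using (hw.const_smul (-α)).sub hAw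
  obtain ⟨hZ, hAZ⟩ := memOne_and_Aop_eq_of_tendsto e lam (fun n => (hdom n).2.2.2) hz hAz
  have hWg : W = g := tendsto_nhds_unique hw hwg
  exact ⟨hWg ▸ hg, hZ, tendsto_nhds_unique hv hvf, hWg, by rw [hAZ, sub_sub_cancel]⟩

/-- The operator `𝔸(u,v,w) = (v, w, -αw - A(βv+γu+δw))` with domain
`D(𝔸) = {(u,v,w) ∈ Y : w ∈ X^{1/2}, βv+γu+δw ∈ X¹}` is closed in
`Y = X^{1/2} × X^{1/2} × X`: if `(uₙ,vₙ,wₙ) ∈ D(𝔸)`, `(uₙ,vₙ,wₙ) → (u,v,w)` in `Y`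
and `𝔸(uₙ,vₙ,wₙ) → (f,g,h)` in `Y`, then `(u,v,w) ∈ D(𝔸)` and `𝔸(u,v,w) = (f,g,h)`. -/
theorem operator_A_closed
    (e : HilbertBasis ℕ ℝ X) (lam : ℕ → ℝ) (lam0 : ℝ)
    (hlam0 : 0 < lam0) (hlam : ∀ k, lam0 ≤ lam k)
    (α β γ δ : ℝ) (hα : 0 < α) (hβ : 0 < β) (hγ : 0 < γ) (hδ : 0 < δ)
    (u v w : ℕ → X)
    (hdom : ∀ n, memHalf e lam (u n) ∧ memHalf e lam (v n) ∧ memHalf e lam (w n) ∧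
      memOne e lam (β • v n + γ • u n + δ • w n))
    (U V W f g h : X)
    (hU : memHalf e lam U) (hV : memHalf e lam V)
    (hf : memHalf e lam f) (hg : memHalf e lam g)
    (hconv : Tendsto (fun n => Ynorm e lam (u n - U) (v n - V) (w n - W)) atTop (𝓝 0))
    (hconvA : Tendsto (fun n => Ynorm e lam (v n - f) (w n - g)
        (((-α) • w n - Aop e lam (β • v n + γ • u n + δ • w n)) - h)) atTop (𝓝 0)) :
    memHalf e lam W ∧ memOne e lam (β • V + γ • U + δ • W) ∧
      V = f ∧ W = g ∧ (-α) • W - Aop e lam (β • V + γ • U + δ • W) = h :=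
  operator_A_closed_general e lam lam0 hlam0 hlam α β γ δ u v w hdom U V W f g h hU hV hf hg hconv
    hconvA
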